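/- arXiv:2104.00435 — 2 statements merged into one kernel-verified Lean document; each statement's English description precedes it below -/
import Mathlib

section
/- Let X and Y be Banach spaces such that X has type 2, and let u : X → Y be a continuous linear operator. Then u takes almost unconditionally summable sequences in X into members of ℓ_2⟨Y⟩ if and only if the adjoint u* is absolutely 2-summing (equivalently, u is Cohen strongly 2-summing). -/
/-!
`⇐`: a `2`-summing operator `v` satisfies the `2`-summing inequality with a uniform constant
(gliding hump), hence is almost summing: averaging over signs,
`𝔼 ‖∑ εᵢ v yᵢ‖² ≤ C ‖(yᵢ)‖²_{w,2}`. Choose signs with `εᵢ φᵢ (u xᵢ) = |φᵢ (u xᵢ)|`; then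
`∑ |φᵢ (u xᵢ)| = 𝔼 ⟨∑ εᵢ u*(εᵢ φᵢ), ∑ εᵢ xᵢ⟩ ≤ ‖(u*(εᵢ φᵢ))‖_Rad ‖(xᵢ)‖_Rad` by Cauchy–Schwarz,
and the first factor is controlled by the weak `ℓ₂` norm of `(φᵢ)`.

`⇒`: type 2 puts every sequence of `ℓ₂(X)` into `Rad(X)`. For weakly `2`-summable `(φᵢ)` and
`(aᵢ) ∈ ℓ₂`, take `xᵢ = aᵢ eᵢ` with `eᵢ` half-norming `u*φᵢ`: the hypothesis gives
`∑ aᵢ ‖u*φᵢ‖ < ∞`, and since `(aᵢ)` is arbitrary, `(‖u*φᵢ‖) ∈ ℓ₂` (Landau's resonance theorem).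

Rademacher averages are computed exactly: `r₀, …, r_{m-1}` are constant on the dyadic intervals
of length `2⁻ᵐ`, so the integral defining `radNorm m` is a mean over the `2ᵐ` sign vectors.
-/

open MeasureTheory Finset Filter
open scoped ENNReal NNReal

noncomputable section

universe u v

/-- The `i`-th Rademacher function. -/
def rademacher (i : ℕ) (t : ℝ) : ℝ :=
  if Int.fract ((2 : ℝ) ^ i * t) < 1 / 2 then 1 else -1

/-- The Rademacher (`Rad`) norm of the first `m` terms of a sequence:
`(∫_0^1 ‖∑_{i<m} r_i(t) x_i‖² dt)^{1/2}`. -/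
def radNorm {Z : Type u} [NormedAddCommGroup Z] [NormedSpace ℝ Z] (m : ℕ) (x : ℕ → Z) : ℝ :=
  (∫ t in (0:ℝ)..1, ‖∑ i ∈ Finset.range m, rademacher i t • x i‖ ^ 2) ^ ((1:ℝ) / 2)

/-- Conjugate exponent in `ℝ≥0∞` (`conjExp p = p*`, `1/p + 1/p* = 1`). -/
def conjExp (p : ℝ≥0∞) : ℝ≥0∞ := (1 - p⁻¹)⁻¹

/-- Finite strong `ℓ_q` norm `‖(x_i)_{i<m}‖_q` (sup norm if `q = ∞`). -/
def lpNormFin {Z : Type u} [NormedAddCommGroup Z] (q : ℝ≥0∞) (m : ℕ) (x : ℕ → Z) : ℝ :=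
  if q = ∞ then ⨆ i : Fin m, ‖x (i : ℕ)‖
  else (∑ i ∈ Finset.range m, ‖x i‖ ^ q.toReal) ^ (1 / q.toReal)

/-- Finite weak `ℓ_q` norm `‖(x_i)_{i<m}‖_{w,q}`. -/
def weakNorm {Z : Type u} [NormedAddCommGroup Z] [NormedSpace ℝ Z] (q : ℝ≥0∞) (m : ℕ)
    (x : ℕ → Z) : ℝ :=
  if q = ∞ then ⨆ i : Fin m, ‖x (i : ℕ)‖
  else ⨆ φ : {φ : Z →L[ℝ] ℝ // ‖φ‖ ≤ 1},
    (∑ i ∈ Finset.range m, |φ.1 (x i)| ^ q.toReal) ^ (1 / q.toReal)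

/-- Membership in `Rad(Z)`: almost unconditionally summable sequences. -/
def MemRad {Z : Type u} [NormedAddCommGroup Z] [NormedSpace ℝ Z] (x : ℕ → Z) : Prop :=
  ∃ C, ∀ m, radNorm m x ≤ C

/-- Weakly `q`-summable sequences `ℓ_q^w(Z)`. -/
def MemWeakLp {Z : Type u} [NormedAddCommGroup Z] [NormedSpace ℝ Z] (q : ℝ≥0∞)
    (x : ℕ → Z) : Prop :=
  ∃ C, ∀ m, weakNorm q m x ≤ C

/-- Absolutely `p`-summable sequences `ℓ_p(Z)` (bounded sequences if `p = ∞`). -/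
def MemStrongLp {Z : Type u} [NormedAddCommGroup Z] (p : ℝ≥0∞) (x : ℕ → Z) : Prop :=
  if p = ∞ then ∃ C, ∀ i, ‖x i‖ ≤ C else Summable fun i => ‖x i‖ ^ p.toReal

/-- Cohen strongly `p`-summable sequences `ℓ_p⟨Z⟩`. -/
def MemCohen {Z : Type u} [NormedAddCommGroup Z] [NormedSpace ℝ Z] (p : ℝ≥0∞)
    (y : ℕ → Z) : Prop :=
  ∀ φ : ℕ → (Z →L[ℝ] ℝ), MemWeakLp (conjExp p) φ → Summable fun i => |φ i (y i)|

/-- Almost `p`-summing operators. -/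
def IsAlmostPSumming {Z : Type u} {W : Type v} [NormedAddCommGroup Z] [NormedSpace ℝ Z]
    [NormedAddCommGroup W] [NormedSpace ℝ W] (p : ℝ≥0∞) (u : Z →L[ℝ] W) : Prop :=
  ∃ C, 0 ≤ C ∧ ∀ m (x : ℕ → Z), radNorm m (fun i => u (x i)) ≤ C * weakNorm p m x

/-- The almost `p`-summing norm `π_{al.s.p}(u)`. -/
def almostNorm {Z : Type u} {W : Type v} [NormedAddCommGroup Z] [NormedSpace ℝ Z]
    [NormedAddCommGroup W] [NormedSpace ℝ W] (p : ℝ≥0∞) (u : Z →L[ℝ] W) : ℝ :=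
  sInf {C | 0 ≤ C ∧ ∀ m (x : ℕ → Z), radNorm m (fun i => u (x i)) ≤ C * weakNorm p m x}

/-- Absolutely `p`-summing operators (every operator is `∞`-summing by convention). -/
def IsPSumming {Z : Type u} {W : Type v} [NormedAddCommGroup Z] [NormedSpace ℝ Z]
    [NormedAddCommGroup W] [NormedSpace ℝ W] (p : ℝ≥0∞) (u : Z →L[ℝ] W) : Prop :=
  if p = ∞ then True
  else ∀ x : ℕ → Z, MemWeakLp p x → Summable fun i => ‖u (x i)‖ ^ p.toReal

/-- Cohen strongly `q`-summing with constant `C`. -/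
def IsCohenStrongWith {Z : Type u} {W : Type v} [NormedAddCommGroup Z] [NormedSpace ℝ Z]
    [NormedAddCommGroup W] [NormedSpace ℝ W] (q : ℝ≥0∞) (C : ℝ) (u : Z →L[ℝ] W) : Prop :=
  ∀ m (x : ℕ → Z) (φ : ℕ → (W →L[ℝ] ℝ)),
    ∑ i ∈ Finset.range m, |φ i (u (x i))| ≤ C * lpNormFin q m x * weakNorm (conjExp q) m φ

/-- Cohen strongly `q`-summing operators. -/
def IsCohenStrong {Z : Type u} {W : Type v} [NormedAddCommGroup Z] [NormedSpace ℝ Z]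
    [NormedAddCommGroup W] [NormedSpace ℝ W] (q : ℝ≥0∞) (u : Z →L[ℝ] W) : Prop :=
  ∃ C, 0 ≤ C ∧ IsCohenStrongWith q C u

/-- The Banach space adjoint `u* : W* → Z*`. -/
def adj {Z : Type u} {W : Type v} [NormedAddCommGroup Z] [NormedSpace ℝ Z]
    [NormedAddCommGroup W] [NormedSpace ℝ W] (u : Z →L[ℝ] W) :
    (W →L[ℝ] ℝ) →L[ℝ] (Z →L[ℝ] ℝ) :=
  (ContinuousLinearMap.compSL Z W ℝ (RingHom.id ℝ) (RingHom.id ℝ)).flip u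

/-- `Z` has type `p` with constant `C`. -/
def HasTypeWith (p : ℝ≥0∞) (C : ℝ) (Z : Type u) [NormedAddCommGroup Z] [NormedSpace ℝ Z] :
    Prop :=
  ∀ m (x : ℕ → Z), radNorm m x ≤ C * lpNormFin p m x

/-- `Z` has type `p`. -/
def HasTypeP (p : ℝ≥0∞) (Z : Type u) [NormedAddCommGroup Z] [NormedSpace ℝ Z] : Prop :=
  ∃ C, 0 ≤ C ∧ HasTypeWith p C Z

/-- The type-`p` constant `T_p(Z)`. -/
def typeConst (p : ℝ≥0∞) (Z : Type u) [NormedAddCommGroup Z] [NormedSpace ℝ Z] : ℝ :=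
  sInf {C | 0 ≤ C ∧ HasTypeWith p C Z}

/-- `Z` is an `L_p`-space with constant `lam`. -/
def IsLpSpaceWith (p : ℝ≥0∞) [Fact (1 ≤ p)] (lam : ℝ) (Z : Type u) [NormedAddCommGroup Z]
    [NormedSpace ℝ Z] : Prop :=
  ∀ E : Submodule ℝ Z, FiniteDimensional ℝ E →
    ∃ F : Submodule ℝ Z, E ≤ F ∧ FiniteDimensional ℝ F ∧
      ∃ v : F ≃L[ℝ] PiLp p (fun _ : Fin (Module.finrank ℝ F) => ℝ),
        ‖(v : F →L[ℝ] PiLp p (fun _ : Fin (Module.finrank ℝ F) => ℝ))‖ *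
          ‖(v.symm : PiLp p (fun _ : Fin (Module.finrank ℝ F) => ℝ) →L[ℝ] F)‖ ≤ lam

/-- `Z` is an `L_p`-space. -/
def IsLpSpace (p : ℝ≥0∞) [Fact (1 ≤ p)] (Z : Type u) [NormedAddCommGroup Z]
    [NormedSpace ℝ Z] : Prop :=
  ∃ lam : ℝ, 1 < lam ∧ IsLpSpaceWith p lam Z

/-- `Z` is isomorphic to a Hilbert space. -/
def IsomorphicToHilbert (Z : Type u) [NormedAddCommGroup Z] [NormedSpace ℝ Z] : Prop :=
  ∃ ι : Type u, Nonempty (Z ≃L[ℝ] lp (fun _ : ι => ℝ) 2)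

/-- `Z` is isomorphic to a closed subspace of some `L_r(μ)`. -/
def IsomorphicToClosedSubspaceLp (r : ℝ≥0∞) [Fact (1 ≤ r)] (Z : Type u)
    [NormedAddCommGroup Z] [NormedSpace ℝ Z] : Prop :=
  ∃ (Ω : Type) (mΩ : MeasurableSpace Ω) (μ : @MeasureTheory.Measure Ω mΩ)
    (S : Submodule ℝ (@MeasureTheory.Lp Ω ℝ mΩ _ r μ)),
    IsClosed (S : Set (@MeasureTheory.Lp Ω ℝ mΩ _ r μ)) ∧ Nonempty (Z ≃L[ℝ] S)

/-- The value of `r_i` (`i < m`) on `[k / 2^m, (k + 1) / 2^m)`: the sign of binary digit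
`m - 1 - i` of `k`. -/
def dyadicSign (m k i : ℕ) : ℝ := if k.testBit (m - 1 - i) then -1 else 1

lemma dyadicSign_mul_self (m k i : ℕ) : dyadicSign m k i * dyadicSign m k i = 1 := by
  unfold dyadicSign; split_ifs <;> norm_num

lemma sum_dyadicSign_mul_dyadicSign {m i j : ℕ} (hi : i < m) (hj : j < m) :
    ∑ k ∈ range (2 ^ m), dyadicSign m k i * dyadicSign m k j = if i = j then 2 ^ m else 0 := by
  split_ifs with hij
  · subst hij
    simp [dyadicSign_mul_self]
  · have hbit : m - 1 - i ≠ m - 1 - j := by omega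
    -- flipping the digit `m - 1 - i` of `k` changes the sign of the summand
    refine Finset.sum_involution (fun k _ => k ^^^ 2 ^ (m - 1 - i)) ?_ ?_ ?_ ?_
    · intro k _
      simp only [dyadicSign, Nat.testBit_xor, Nat.testBit_two_pow_self,
        Nat.testBit_two_pow_of_ne hbit]
      cases k.testBit (m - 1 - i) <;> cases k.testBit (m - 1 - j) <;> norm_num
    · intro k _ _ h
      have := congrArg (fun n => n.testBit (m - 1 - i)) h
      simp at this
    · intro k hk
      exact Finset.mem_range.2 (Nat.xor_lt_two_pow (Finset.mem_range.1 hk)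
        (Nat.pow_lt_pow_right (by norm_num) (by omega)))
    · intro k _
      simp

lemma sum_dyadicSign_bilinear (m : ℕ) (G : ℕ → ℕ → ℝ) :
    ∑ k ∈ range (2 ^ m), ∑ i ∈ range m, ∑ j ∈ range m, dyadicSign m k i * dyadicSign m k j * G i j
      = 2 ^ m * ∑ i ∈ range m, G i i := by
  rw [Finset.mul_sum, Finset.sum_comm]
  refine Finset.sum_congr rfl fun i hi => ?_
  rw [Finset.sum_comm]
  simp_rw [← Finset.sum_mul]
  rw [Finset.sum_congr rfl fun j hj => by
    rw [sum_dyadicSign_mul_dyadicSign (Finset.mem_range.1 hi) (Finset.mem_range.1 hj)]]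
  simp [hi]

lemma sum_sq_sum_dyadicSign_mul (m : ℕ) (t : ℕ → ℝ) :
    ∑ k ∈ range (2 ^ m), (∑ i ∈ range m, dyadicSign m k i * t i) ^ 2
      = 2 ^ m * ∑ i ∈ range m, t i ^ 2 := by
  simp_rw [sq, Finset.sum_mul_sum]
  convert sum_dyadicSign_bilinear m (fun i j => t i * t j) using 4; ring

lemma sum_dyadicSign_apply {Z : Type*} [NormedAddCommGroup Z] [NormedSpace ℝ Z] (m : ℕ)
    (ψ : ℕ → (Z →L[ℝ] ℝ)) (x : ℕ → Z) :
    ∑ k ∈ range (2 ^ m),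
        (∑ i ∈ range m, dyadicSign m k i • ψ i) (∑ j ∈ range m, dyadicSign m k j • x j)
      = 2 ^ m * ∑ i ∈ range m, ψ i (x i) := by
  rw [← sum_dyadicSign_bilinear m (fun i j => ψ j (x i))]
  simp only [map_sum, map_smul, FunLike.coe_sum, Finset.sum_apply, FunLike.coe_smul,
    Pi.smul_apply, smul_eq_mul, Finset.mul_sum]
  exact Finset.sum_congr rfl fun _ _ => Finset.sum_congr rfl fun _ _ =>
    Finset.sum_congr rfl fun _ _ => by ring

lemma fract_lt_half_iff_even_floor (y : ℝ) : Int.fract y < 1 / 2 ↔ Even ⌊2 * y⌋ := by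
  have hfloor : ⌊2 * y⌋ = 2 * ⌊y⌋ + ⌊2 * Int.fract y⌋ := by
    rw [← Int.floor_intCast_add, Int.fract]
    push_cast
    ring_nf
  have h0 := Int.fract_nonneg y
  have h1 := Int.fract_lt_one y
  rcases lt_or_ge (Int.fract y) (1 / 2) with h | h
  · have : ⌊2 * Int.fract y⌋ = 0 := Int.floor_eq_zero_iff.2 ⟨by positivity, by linarith⟩
    rw [hfloor, this, add_zero]
    exact iff_of_true h (even_two_mul _)
  · have : ⌊2 * Int.fract y⌋ = 1 :=
      Int.floor_eq_iff.2 ⟨by push_cast; linarith, by push_cast; linarith⟩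
    rw [hfloor, this]
    exact iff_of_false (not_lt.2 h) (Int.not_even_two_mul_add_one _)

lemma rademacher_eq_dyadicSign {m k i : ℕ} (hi : i < m) {t : ℝ} (ht : 0 ≤ t)
    (hk : ⌊2 ^ m * t⌋₊ = k) : rademacher i t = dyadicSign m k i := by
  have hdigit : ⌊2 * (2 ^ i * t)⌋ = ((k / 2 ^ (m - 1 - i) : ℕ) : ℤ) := by
    have hm : (2 : ℝ) ^ m = 2 * 2 ^ i * 2 ^ (m - 1 - i) := by
      rw [← pow_succ', ← pow_add]; congr 1; omega
    rw [← Int.natCast_floor_eq_floor (by positivity), ← hk, ← Nat.floor_div_natCast]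
    congr 2
    push_cast
    field_simp
    rw [hm]
    ring
  simp only [rademacher, fract_lt_half_iff_even_floor, hdigit, Int.even_coe_nat, Nat.even_iff,
    dyadicSign, Nat.testBit_eq_decide_div_mod_eq, decide_eq_true_eq]
  split_ifs <;> first | rfl | omega

lemma intervalIntegrable_of_eqOn_Ioo {f : ℝ → ℝ} {a b c : ℝ} (hab : a ≤ b)
    (h : Set.EqOn f (fun _ => c) (Set.Ioo a b)) : IntervalIntegrable f volume a b := by
  rw [intervalIntegrable_iff_integrableOn_Ioc_of_le hab, integrableOn_Ioc_iff_integrableOn_Ioo]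
  exact (integrableOn_const (C := c) measure_Ioo_lt_top.ne).congr_fun h.symm measurableSet_Ioo

lemma intervalIntegral_eq_of_eqOn_Ioo {f : ℝ → ℝ} {a b c : ℝ} (hab : a ≤ b)
    (h : Set.EqOn f (fun _ => c) (Set.Ioo a b)) : ∫ t in a..b, f t = (b - a) * c := by
  rw [intervalIntegral.integral_of_le hab, integral_Ioc_eq_integral_Ioo,
    setIntegral_congr_fun measurableSet_Ioo h, setIntegral_const, smul_eq_mul,
    Real.volume_real_Ioo_of_le hab]

lemma intervalIntegral_eq_avg_of_eq_floor {N : ℕ} (hN : 0 < N) {f : ℝ → ℝ} {c : ℕ → ℝ}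
    (h : ∀ t ∈ Set.Ico (0 : ℝ) 1, f t = c ⌊N * t⌋₊) :
    ∫ t in (0 : ℝ)..1, f t = (N : ℝ)⁻¹ * ∑ k ∈ range N, c k := by
  have hN' : (0 : ℝ) < N := by exact_mod_cast hN
  have hle (k : ℕ) : (k : ℝ) / N ≤ (k + 1 : ℕ) / N := by gcongr; simp
  have hpiece : ∀ k < N, Set.EqOn f (fun _ => c k) (Set.Ioo ((k : ℝ) / N) ((k + 1 : ℕ) / N)) := by
    intro k hk t ⟨hkt, htk⟩
    have hk0 : 0 ≤ (k : ℝ) / N := by positivity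
    have hk1 : ((k + 1 : ℕ) : ℝ) / N ≤ 1 := by
      rw [div_le_one hN']; exact_mod_cast hk
    rw [h t ⟨by linarith, by linarith⟩]
    congr 1
    rw [div_lt_iff₀ hN'] at hkt
    rw [lt_div_iff₀ hN'] at htk
    push_cast at htk
    rw [Nat.floor_eq_iff (by nlinarith)]
    constructor <;> linarith
  have hsum := intervalIntegral.sum_integral_adjacent_intervals (f := f) (μ := volume)
    (a := fun k : ℕ => (k : ℝ) / N) fun k hk => intervalIntegrable_of_eqOn_Ioo (hle k) (hpiece k hk)
  simp only [Nat.cast_zero, zero_div, div_self hN'.ne'] at hsum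
  rw [← hsum, Finset.mul_sum]
  refine Finset.sum_congr rfl fun k hk => ?_
  rw [intervalIntegral_eq_of_eqOn_Ioo (hle k) (hpiece k (Finset.mem_range.1 hk))]
  push_cast
  ring

section RademacherNorm

variable {Z : Type*} [NormedAddCommGroup Z] [NormedSpace ℝ Z]

lemma radNorm_eq_sqrt (m : ℕ) (x : ℕ → Z) :
    radNorm m x =
      √((2 ^ m)⁻¹ * ∑ k ∈ range (2 ^ m), ‖∑ i ∈ range m, dyadicSign m k i • x i‖ ^ 2) := by
  have h : ∀ t ∈ Set.Ico (0 : ℝ) 1, ‖∑ i ∈ range m, rademacher i t • x i‖ ^ 2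
      = ‖∑ i ∈ range m, dyadicSign m ⌊((2 ^ m : ℕ) : ℝ) * t⌋₊ i • x i‖ ^ 2 := by
    intro t ht
    push_cast
    congr 2
    exact Finset.sum_congr rfl fun i hi =>
      by rw [rademacher_eq_dyadicSign (Finset.mem_range.1 hi) ht.1 rfl]
  rw [radNorm, intervalIntegral_eq_avg_of_eq_floor (Nat.two_pow_pos m)
    (c := fun k => ‖∑ i ∈ range m, dyadicSign m k i • x i‖ ^ 2) h, Real.sqrt_eq_rpow]
  push_cast
  rfl

lemma radNorm_nonneg (m : ℕ) (x : ℕ → Z) : 0 ≤ radNorm m x := by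
  rw [radNorm_eq_sqrt]; positivity

lemma sum_apply_le_radNorm_mul_radNorm (m : ℕ) (ψ : ℕ → (Z →L[ℝ] ℝ)) (x : ℕ → Z) :
    ∑ i ∈ range m, ψ i (x i) ≤ radNorm m ψ * radNorm m x := by
  set Ψ := fun k => ∑ i ∈ range m, dyadicSign m k i • ψ i
  set X := fun k => ∑ i ∈ range m, dyadicSign m k i • x i
  have hpair : ∑ k ∈ range (2 ^ m), Ψ k (X k) ≤
      √(∑ k ∈ range (2 ^ m), ‖Ψ k‖ ^ 2) * √(∑ k ∈ range (2 ^ m), ‖X k‖ ^ 2) :=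
    (Finset.sum_le_sum fun k _ => (le_abs_self _).trans ((Ψ k).le_opNorm (X k))).trans
      (Real.sum_mul_le_sqrt_mul_sqrt _ _ _)
  rw [sum_dyadicSign_apply] at hpair
  rw [radNorm_eq_sqrt, radNorm_eq_sqrt, Real.sqrt_mul (by positivity),
    Real.sqrt_mul (by positivity), mul_mul_mul_comm, Real.mul_self_sqrt (by positivity)]
  have h2m : (0 : ℝ) < 2 ^ m := by positivity
  calc ∑ i ∈ range m, ψ i (x i) = (2 ^ m)⁻¹ * (2 ^ m * ∑ i ∈ range m, ψ i (x i)) := by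
        field_simp
    _ ≤ _ := mul_le_mul_of_nonneg_left hpair (by positivity)

end RademacherNorm

lemma conjExp_two : conjExp 2 = 2 := by
  rw [conjExp, ENNReal.one_sub_inv_two, inv_inv]

section WeakNorm

variable {Z : Type*} [NormedAddCommGroup Z] [NormedSpace ℝ Z]

lemma weakNorm_two_eq (m : ℕ) (x : ℕ → Z) :
    weakNorm 2 m x = ⨆ φ : {φ : Z →L[ℝ] ℝ // ‖φ‖ ≤ 1}, √(∑ i ∈ range m, φ.1 (x i) ^ 2) := by
  simp only [weakNorm, ENNReal.ofNat_ne_top, if_false, ENNReal.toReal_ofNat, Real.rpow_two,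
    sq_abs, Real.sqrt_eq_rpow]

lemma bddAbove_sqrt_sum_sq_apply (m : ℕ) (x : ℕ → Z) :
    BddAbove (Set.range fun φ : {φ : Z →L[ℝ] ℝ // ‖φ‖ ≤ 1} => √(∑ i ∈ range m, φ.1 (x i) ^ 2)) := by
  refine ⟨√(∑ i ∈ range m, ‖x i‖ ^ 2), ?_⟩
  rintro _ ⟨φ, rfl⟩
  refine Real.sqrt_le_sqrt (Finset.sum_le_sum fun i _ => ?_)
  rw [← sq_abs]
  exact pow_le_pow_left₀ (abs_nonneg _) (by simpa using φ.1.le_of_opNorm_le φ.2 (x i)) 2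

lemma sqrt_sum_sq_apply_le_weakNorm_two (m : ℕ) (x : ℕ → Z) {φ : Z →L[ℝ] ℝ} (hφ : ‖φ‖ ≤ 1) :
    √(∑ i ∈ range m, φ (x i) ^ 2) ≤ weakNorm 2 m x := by
  rw [weakNorm_two_eq]
  exact le_ciSup (f := fun φ : {φ : Z →L[ℝ] ℝ // ‖φ‖ ≤ 1} => √(∑ i ∈ range m, φ.1 (x i) ^ 2))
    (bddAbove_sqrt_sum_sq_apply m x) ⟨φ, hφ⟩

lemma weakNorm_two_nonneg (m : ℕ) (x : ℕ → Z) : 0 ≤ weakNorm 2 m x :=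
  (Real.sqrt_nonneg _).trans (sqrt_sum_sq_apply_le_weakNorm_two m x (φ := 0) (by simp))

lemma sum_sq_apply_le_weakNorm_two_sq (m : ℕ) (x : ℕ → Z) {φ : Z →L[ℝ] ℝ} (hφ : ‖φ‖ ≤ 1) :
    ∑ i ∈ range m, φ (x i) ^ 2 ≤ weakNorm 2 m x ^ 2 :=
  (Real.sqrt_le_left (weakNorm_two_nonneg m x)).1 (sqrt_sum_sq_apply_le_weakNorm_two m x hφ)

lemma weakNorm_two_le_sqrt {m : ℕ} {x : ℕ → Z} {B : ℝ}
    (h : ∀ φ : Z →L[ℝ] ℝ, ‖φ‖ ≤ 1 → ∑ i ∈ range m, φ (x i) ^ 2 ≤ B) :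
    weakNorm 2 m x ≤ √B := by
  have : Nonempty {φ : Z →L[ℝ] ℝ // ‖φ‖ ≤ 1} := ⟨⟨0, by simp⟩⟩
  rw [weakNorm_two_eq]
  exact ciSup_le fun φ => Real.sqrt_le_sqrt (h φ.1 φ.2)

lemma weakNorm_two_smul_le (m : ℕ) (x : ℕ → Z) {c : ℕ → ℝ} (hc : ∀ i, |c i| ≤ 1) :
    weakNorm 2 m (fun i => c i • x i) ≤ weakNorm 2 m x := by
  refine (weakNorm_two_le_sqrt fun φ hφ => ?_).trans_eq (Real.sqrt_sq (weakNorm_two_nonneg m x))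
  refine le_trans ?_ (sum_sq_apply_le_weakNorm_two_sq m x hφ)
  refine Finset.sum_le_sum fun i _ => ?_
  rw [map_smul, smul_eq_mul, mul_pow, ← sq_abs (c i)]
  exact mul_le_of_le_one_left (sq_nonneg _) (pow_le_one₀ (abs_nonneg _) (hc i))

end WeakNorm

lemma lpNormFin_two {Z : Type*} [NormedAddCommGroup Z] (m : ℕ) (x : ℕ → Z) :
    lpNormFin 2 m x = √(∑ i ∈ range m, ‖x i‖ ^ 2) := by
  simp only [lpNormFin, ENNReal.ofNat_ne_top, if_false, ENNReal.toReal_ofNat, Real.rpow_two,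
    Real.sqrt_eq_rpow]

lemma isPSumming_two_iff {Z W : Type*} [NormedAddCommGroup Z] [NormedSpace ℝ Z]
    [NormedAddCommGroup W] [NormedSpace ℝ W] (v : Z →L[ℝ] W) :
    IsPSumming 2 v ↔ ∀ x : ℕ → Z, MemWeakLp 2 x → Summable fun i => ‖v (x i)‖ ^ 2 := by
  simp only [IsPSumming, ENNReal.ofNat_ne_top, if_false, ENNReal.toReal_ofNat, Real.rpow_two]

def blockSeq {Z : Type*} [Zero Z] (ms : ℕ → ℕ) (y : ℕ → ℕ → Z) (j : ℕ) : Z :=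
  if (Nat.unpair j).2 < ms (Nat.unpair j).1 then y (Nat.unpair j).1 (Nat.unpair j).2 else 0

lemma hasSum_blockSeq_iff {Z : Type*} [Zero Z] (ms : ℕ → ℕ) (y : ℕ → ℕ → Z) {F : Z → ℝ}
    (hF : 0 ≤ F) (hF0 : F 0 = 0) {a : ℝ} :
    HasSum (fun j => F (blockSeq ms y j)) a ↔
      HasSum (fun n => ∑ i ∈ range (ms n), F (y n i)) a := by
  set f : ℕ × ℕ → ℝ := fun p => F (if p.2 < ms p.1 then y p.1 p.2 else 0)
  have hrow (n : ℕ) : HasSum (fun i => f (n, i)) (∑ i ∈ range (ms n), F (y n i)) := by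
    have h : HasSum (fun i => f (n, i)) (∑ i ∈ range (ms n), f (n, i)) :=
      hasSum_sum_of_ne_finset_zero fun i hi => by simp [f, Finset.mem_range.not.1 hi, hF0]
    convert h using 1
    exact Finset.sum_congr rfl fun i hi => by simp [f, Finset.mem_range.1 hi]
  rw [show (fun j => F (blockSeq ms y j)) = f ∘ Nat.pairEquiv.symm from rfl,
    Nat.pairEquiv.symm.hasSum_iff]
  refine ⟨fun h => h.prod_fiberwise hrow, fun h => ?_⟩
  have hf : Summable f :=
    (summable_prod_of_nonneg fun p => hF _).2
      ⟨fun n => (hrow n).summable, h.summable.congr fun n => (hrow n).tsum_eq.symm⟩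
  exact (hf.hasSum.prod_fiberwise hrow).unique h ▸ hf.hasSum

theorem IsPSumming.exists_sum_sq_le {Z W : Type*} [NormedAddCommGroup Z] [NormedSpace ℝ Z]
    [NormedAddCommGroup W] [NormedSpace ℝ W] {v : Z →L[ℝ] W} (hv : IsPSumming 2 v) :
    ∃ C, 0 ≤ C ∧ ∀ m (x : ℕ → Z), ∑ i ∈ range m, ‖v (x i)‖ ^ 2 ≤ C * weakNorm 2 m x ^ 2 := by
  by_contra! H
  choose ms xs hbig using fun n : ℕ => H (4 ^ n) (by positivity)
  set S := fun n => ∑ i ∈ range (ms n), ‖v (xs n i)‖ ^ 2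
  have hS (n : ℕ) : 0 < S n := lt_of_le_of_lt (by positivity) (hbig n)
  -- Gliding hump: scaled to contribute `1` to the `2`-summing sum but at most `4⁻ⁿ` to weak sums,
  -- the bad blocks form a single weakly `2`-summable sequence.
  set y := fun n i => (√(S n))⁻¹ • xs n i
  have hweak : MemWeakLp 2 (blockSeq ms y) := by
    refine ⟨√(4 / 3), fun M => weakNorm_two_le_sqrt fun φ hφ => ?_⟩
    have hrow (n : ℕ) : ∑ i ∈ range (ms n), φ (y n i) ^ 2 ≤ (1 / 4) ^ n := by
      simp only [y, map_smul, smul_eq_mul, mul_pow, inv_pow, Real.sq_sqrt (hS n).le,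
        ← Finset.mul_sum]
      rw [inv_mul_le_iff₀ (hS n)]
      calc ∑ i ∈ range (ms n), φ (xs n i) ^ 2 ≤ weakNorm 2 (ms n) (xs n) ^ 2 :=
            sum_sq_apply_le_weakNorm_two_sq (ms n) (xs n) hφ
        _ ≤ S n * (1 / 4) ^ n := by
          rw [one_div, inv_pow, le_mul_inv_iff₀ (by positivity)]
          linarith [hbig n]
    have hgeom : Summable fun n : ℕ => ((1 : ℝ) / 4) ^ n :=
      summable_geometric_of_lt_one (by norm_num) (by norm_num)
    have hsum := (hgeom.of_nonneg_of_le (fun n => Finset.sum_nonneg fun i _ => sq_nonneg _)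
      hrow).hasSum
    have hz := (hasSum_blockSeq_iff ms y (F := fun e => φ e ^ 2) (fun _ => sq_nonneg _)
      (by simp)).2 hsum
    calc ∑ j ∈ range M, φ (blockSeq ms y j) ^ 2
        ≤ ∑' n, ∑ i ∈ range (ms n), φ (y n i) ^ 2 :=
          sum_le_hasSum (range M) (fun _ _ => sq_nonneg _) hz
      _ ≤ ∑' n : ℕ, ((1 : ℝ) / 4) ^ n := hsum.summable.tsum_le_tsum hrow hgeom
      _ = 4 / 3 := by rw [tsum_geometric_of_lt_one (by norm_num) (by norm_num)]; norm_num
  have hone := (hasSum_blockSeq_iff ms y (F := fun e => ‖v e‖ ^ 2) (fun _ => sq_nonneg _)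
    (by simp)).1 ((isPSumming_two_iff v).1 hv _ hweak).hasSum
  have hblock (n : ℕ) : ∑ i ∈ range (ms n), ‖v (y n i)‖ ^ 2 = 1 := by
    simp only [y, map_smul, norm_smul, mul_pow, Real.norm_eq_abs, sq_abs, inv_pow,
      Real.sq_sqrt (hS n).le, ← Finset.mul_sum]
    exact inv_mul_cancel₀ (hS n).ne'
  simp only [hblock] at hone
  exact one_ne_zero ((summable_const_iff 1).1 hone.summable)

theorem IsPSumming.isAlmostPSumming {Z W : Type*} [NormedAddCommGroup Z] [NormedSpace ℝ Z]
    [NormedAddCommGroup W] [NormedSpace ℝ W] {v : Z →L[ℝ] W} (hv : IsPSumming 2 v) :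
    IsAlmostPSumming 2 v := by
  obtain ⟨C, hC, hsum⟩ := hv.exists_sum_sq_le
  refine ⟨√C, Real.sqrt_nonneg _, fun m x => ?_⟩
  set w := weakNorm 2 m x
  set X := fun k => ∑ i ∈ range m, dyadicSign m k i • x i
  have hX : weakNorm 2 (2 ^ m) X ^ 2 ≤ 2 ^ m * w ^ 2 := by
    refine (pow_le_pow_left₀ (weakNorm_two_nonneg _ _)
      (weakNorm_two_le_sqrt fun φ hφ => ?_) 2).trans (Real.sq_sqrt (by positivity)).le
    simp only [X, map_sum, map_smul, smul_eq_mul, sum_sq_sum_dyadicSign_mul]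
    exact mul_le_mul_of_nonneg_left (sum_sq_apply_le_weakNorm_two_sq m x hφ) (by positivity)
  have h2m : (0 : ℝ) < 2 ^ m := by positivity
  calc radNorm m (fun i => v (x i))
      = √((2 ^ m)⁻¹ * ∑ k ∈ range (2 ^ m), ‖v (X k)‖ ^ 2) := by
        simp only [radNorm_eq_sqrt, X, map_sum, map_smul]
    _ ≤ √((2 ^ m)⁻¹ * (C * (2 ^ m * w ^ 2))) := by
        gcongr
        exact (hsum _ X).trans (mul_le_mul_of_nonneg_left hX hC)
    _ = √C * w := by
        rw [inv_mul_eq_div, mul_div_assoc, mul_div_cancel_left₀ _ h2m.ne', Real.sqrt_mul hC,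
          Real.sqrt_sq (weakNorm_two_nonneg m x)]

section AbelDini

variable {b : ℕ → ℝ}

lemma summable_div_one_add_sum_range_sq (hb : ∀ i, 0 ≤ b i) :
    Summable fun i => b i / (1 + ∑ j ∈ range (i + 1), b j) ^ 2 := by
  set P := fun n => 1 + ∑ j ∈ range n, b j
  have hP (n : ℕ) : 1 ≤ P n := le_add_of_nonneg_right (Finset.sum_nonneg fun j _ => hb j)
  have hterm (i : ℕ) : b i / P (i + 1) ^ 2 ≤ 1 / P i - 1 / P (i + 1) := by
    have hPi : P (i + 1) = P i + b i := by simp only [P, Finset.sum_range_succ]; ring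
    have hp : 0 < P i := one_pos.trans_le (hP i)
    have ht := hb i
    rw [hPi, div_sub_div _ _ hp.ne' (by positivity),
      div_le_div_iff₀ (by positivity) (by positivity)]
    nlinarith [mul_nonneg (mul_nonneg ht ht) (add_nonneg hp.le ht)]
  show Summable fun i => b i / P (i + 1) ^ 2
  refine summable_of_sum_range_le (c := 1) (fun i => div_nonneg (hb i) (sq_nonneg _)) fun n => ?_
  calc ∑ i ∈ range n, b i / P (i + 1) ^ 2 ≤ ∑ i ∈ range n, (1 / P i - 1 / P (i + 1)) :=
        Finset.sum_le_sum fun i _ => hterm i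
    _ = 1 / P 0 - 1 / P n := Finset.sum_range_sub' _ n
    _ ≤ 1 := by
      have : 0 ≤ 1 / P n := one_div_nonneg.2 (zero_le_one.trans (hP n))
      simp only [P, Finset.sum_range_zero, add_zero, div_one] at this ⊢
      linarith

lemma not_summable_div_one_add_sum_range (hb : ∀ i, 0 ≤ b i) (hns : ¬Summable b) :
    ¬Summable fun i => b i / (1 + ∑ j ∈ range (i + 1), b j) := by
  set P := fun n => 1 + ∑ j ∈ range n, b j
  set g := fun i => b i / P (i + 1)
  have hP (n : ℕ) : 0 < P n :=
    lt_add_of_pos_of_le one_pos (Finset.sum_nonneg fun j _ => hb j)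
  have hPmono : Monotone P := fun m n hmn =>
    add_le_add_right (Finset.sum_le_sum_of_subset_of_nonneg (Finset.range_subset_range.2 hmn)
      fun j _ _ => hb j) 1
  intro hg
  -- some tail of `∑ gᵢ` is `< 1/2`, but every tail reaches `1/2` once `P` has doubled
  obtain ⟨n, hn⟩ := ((tendsto_sum_nat_add g).eventually (gt_mem_nhds one_half_pos)).exists
  have hPtop : Tendsto P atTop atTop :=
    tendsto_atTop_add_const_left _ 1 ((not_summable_iff_tendsto_nat_atTop_of_nonneg hb).1 hns)
  obtain ⟨M, hM, hnM⟩ := ((hPtop.eventually_ge_atTop (2 * P n)).and (eventually_ge_atTop n)).exists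
  obtain ⟨K, rfl⟩ := Nat.exists_eq_add_of_le hnM
  have hlow : (P (n + K) - P n) / P (n + K) ≤ ∑ k ∈ range K, g (k + n) := by
    have hdiff : P (n + K) - P n = ∑ k ∈ range K, b (k + n) := by
      simp only [P, Finset.sum_range_add, add_comm _ n]; ring
    rw [hdiff, Finset.sum_div]
    exact Finset.sum_le_sum fun k hk => div_le_div_of_nonneg_left (hb _) (hP _)
      (hPmono (by have := Finset.mem_range.1 hk; omega))
  have hup : ∑ k ∈ range K, g (k + n) ≤ ∑' k, g (k + n) :=
    ((summable_nat_add_iff n).2 hg).sum_le_tsum _ fun k _ => div_nonneg (hb _) (hP _).le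
  have hhalf : 1 / 2 ≤ (P (n + K) - P n) / P (n + K) := by
    rw [le_div_iff₀ (hP _)]; linarith [hP n]
  linarith

end AbelDini

lemma summable_sq_of_forall_summable_mul {c : ℕ → ℝ} (hc : ∀ i, 0 ≤ c i)
    (h : ∀ a : ℕ → ℝ, (∀ i, 0 ≤ a i) → Summable (fun i => a i ^ 2) → Summable fun i => a i * c i) :
    Summable fun i => c i ^ 2 := by
  -- Abel–Dini: with `Pᵢ = 1 + ∑_{j ≤ i} cⱼ²`, `aᵢ = cᵢ / Pᵢ` is square-summable while
  -- `∑ aᵢ cᵢ = ∑ cᵢ² / Pᵢ` diverges.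
  by_contra hns
  set P := fun i => 1 + ∑ j ∈ range (i + 1), c j ^ 2
  have hP (i : ℕ) : 0 < P i :=
    lt_add_of_pos_of_le one_pos (Finset.sum_nonneg fun j _ => sq_nonneg _)
  refine not_summable_div_one_add_sum_range (fun i => sq_nonneg (c i)) hns ?_
  have hac := h (fun i => c i / P i) (fun i => div_nonneg (hc i) (hP i).le) (by
    simpa only [div_pow] using summable_div_one_add_sum_range_sq fun i => sq_nonneg (c i))
  simpa only [div_mul_eq_mul_div, ← sq] using hac

lemma HasTypeP.memRad_of_summable_sq {Z : Type*} [NormedAddCommGroup Z] [NormedSpace ℝ Z]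
    (hZ : HasTypeP 2 Z) {x : ℕ → Z} (hx : Summable fun i => ‖x i‖ ^ 2) : MemRad x := by
  obtain ⟨C, hC, hCx⟩ := hZ
  refine ⟨C * √(∑' i, ‖x i‖ ^ 2), fun m => (hCx m x).trans ?_⟩
  rw [lpNormFin_two]
  gcongr
  exact hx.sum_le_tsum _ fun i _ => sq_nonneg _

lemma ContinuousLinearMap.exists_norm_le_one_half_norm_le_abs {Z : Type*} [NormedAddCommGroup Z]
    [NormedSpace ℝ Z] (ψ : Z →L[ℝ] ℝ) : ∃ e : Z, ‖e‖ ≤ 1 ∧ ‖ψ‖ / 2 ≤ |ψ e| := by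
  rcases eq_or_ne ψ 0 with rfl | hψ
  · exact ⟨0, by simp, by simp⟩
  obtain ⟨e, he, hlt⟩ := ψ.exists_lt_apply_of_lt_opNorm (half_lt_self (norm_pos_iff.2 hψ))
  exact ⟨e, he.le, hlt.le⟩

section Adjoint

variable {X Y : Type*} [NormedAddCommGroup X] [NormedSpace ℝ X] [NormedAddCommGroup Y]
  [NormedSpace ℝ Y]

@[simp]
lemma adj_apply (u : X →L[ℝ] Y) (φ : Y →L[ℝ] ℝ) (x : X) : adj u φ x = φ (u x) := rfl

theorem isPSumming_two_adj_of_forall_memCohen (hX : HasTypeP 2 X) (u : X →L[ℝ] Y)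
    (h : ∀ x : ℕ → X, MemRad x → MemCohen 2 fun i => u (x i)) : IsPSumming 2 (adj u) := by
  rw [isPSumming_two_iff]
  intro φ hφ
  choose e he hψe using fun i => (adj u (φ i)).exists_norm_le_one_half_norm_le_abs
  refine summable_sq_of_forall_summable_mul (fun i => norm_nonneg _) fun a ha has => ?_
  have hx : MemRad fun i => a i • e i := hX.memRad_of_summable_sq <|
    has.of_nonneg_of_le (fun i => sq_nonneg _) fun i => by
      rw [norm_smul, mul_pow, Real.norm_eq_abs, sq_abs]
      exact mul_le_of_le_one_right (sq_nonneg _) (pow_le_one₀ (norm_nonneg _) (he i))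
  have hsum := h _ hx φ (by rwa [conjExp_two])
  refine (hsum.mul_left 2).of_nonneg_of_le (fun i => mul_nonneg (ha i) (norm_nonneg _)) fun i => ?_
  have hai := mul_le_mul_of_nonneg_left (hψe i) (ha i)
  simp only [map_smul, smul_eq_mul, abs_mul, abs_of_nonneg (ha i)]
  rw [adj_apply] at hai
  linarith

theorem memCohen_two_of_isPSumming_two_adj (u : X →L[ℝ] Y) (hu : IsPSumming 2 (adj u))
    {x : ℕ → X} (hx : MemRad x) : MemCohen 2 fun i => u (x i) := by
  obtain ⟨A, hA, hAu⟩ := hu.isAlmostPSumming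
  obtain ⟨Cx, hCx⟩ := hx
  intro φ hφ
  obtain ⟨D, hD⟩ : MemWeakLp 2 φ := by rwa [conjExp_two] at hφ
  refine summable_of_sum_range_le (c := A * D * Cx) (fun _ => abs_nonneg _) fun m => ?_
  set ε := fun i => (SignType.sign (φ i (u (x i))) : ℝ)
  have hε (i : ℕ) : |ε i| ≤ 1 := by
    rcases lt_trichotomy (φ i (u (x i))) 0 with h | h | h <;> simp [ε, h]
  calc ∑ i ∈ range m, |φ i (u (x i))| = ∑ i ∈ range m, adj u (ε i • φ i) (x i) := by
        simp [ε, sign_mul_self]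
    _ ≤ radNorm m (fun i => adj u (ε i • φ i)) * radNorm m x :=
        sum_apply_le_radNorm_mul_radNorm m _ x
    _ ≤ A * weakNorm 2 m (fun i => ε i • φ i) * Cx :=
        mul_le_mul (hAu m _) (hCx m) (radNorm_nonneg m x)
          (mul_nonneg hA (weakNorm_two_nonneg m _))
    _ ≤ A * D * Cx := by
        gcongr
        · exact (radNorm_nonneg m x).trans (hCx m)
        · exact (weakNorm_two_smul_le m φ hε).trans (hD m)

end Adjoint

theorem stmt4_general {X : Type u} {Y : Type v} [NormedAddCommGroup X] [NormedSpace ℝ X]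
    [NormedAddCommGroup Y] [NormedSpace ℝ Y]
    (hX : HasTypeP 2 X) (u : X →L[ℝ] Y) :
    (∀ x : ℕ → X, MemRad x → MemCohen 2 (fun i => u (x i))) ↔ IsPSumming 2 (adj u) :=
  ⟨isPSumming_two_adj_of_forall_memCohen hX u,
    fun hu _ hx => memCohen_two_of_isPSumming_two_adj u hu hx⟩

/-- For `X` of type 2: `u` maps almost unconditionally summable sequences
into `ℓ_2⟨Y⟩` iff `u*` is 2-summing (equivalently, `u` is Cohen strongly 2-summing). -/
theorem stmt4 {X : Type u} {Y : Type v} [NormedAddCommGroup X] [NormedSpace ℝ X]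
    [CompleteSpace X] [NormedAddCommGroup Y] [NormedSpace ℝ Y] [CompleteSpace Y]
    (hX : HasTypeP 2 X) (u : X →L[ℝ] Y) :
    (∀ x : ℕ → X, MemRad x → MemCohen 2 (fun i => u (x i))) ↔ IsPSumming 2 (adj u) :=
  stmt4_general hX u
end
end

section
/- Let 1 ≤ q* ≤ 2 ≤ p < ∞ and let n, m be positive integers. For any Banach space Y, vectors w_1,...,w_n ∈ Y, scalar matrix (ν_{i,k}) ∈ ℝ^{m×n}, and functionals y_1*,...,y_m* ∈ Y*, one has Σ_{i=1}^m |y_i*(Σ_{k=1}^n ν_{i,k} w_k)| ≤ (1/A_{q*}) · K_{2,q*} · (Σ_{i=1}^m (Σ_{k=1}^n |ν_{i,k}|^{p*})^{q/p*})^{1/q} · ‖(y_i*)_{i=1}^m‖_{w,q*} · (∫_0^1 ‖Σ_{k=1}^n r_k(t) w_k‖² dt)^{1/2}, where 1/p + 1/p* = 1 and 1/q + 1/q* = 1. -/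
open MeasureTheory Finset Filter
open scoped ENNReal NNReal

noncomputable section

universe u v

/-!
For each row `i`, Hölder in `k` followed by `‖·‖_p ≤ ‖·‖_2` (as `p ≥ 2`) bounds
`|y_i*(∑_k ν_{i,k} w_k)|` by `α_i (∑_k y_i*(w_k)²)^{1/2}` with `α_i = ‖(ν_{i,k})_k‖_{p*}`, and
Khinchin turns the square function into `β_i / A`, where `β_i` is the `L_{q*}[0,1]` norm of
`y_i*(∑_k r_k w_k)`. Hölder in `i` leaves `‖α‖_q ‖β‖_{q*}`. Exchanging sum and integral,
`‖β‖_{q*}` is at most `‖(y_i*)‖_{w,q*} · ‖∑_k r_k w_k‖_{L_{q*}}`, since evaluation at a point of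
`Y` is a functional on `Y*` of norm at most the norm of the point; Kahane bounds the last factor
by `K` times the Rademacher norm.
-/

open Real

lemma measurable_rademacher (i : ℕ) : Measurable (rademacher i) :=
  Measurable.ite (measurableSet_lt (measurable_id.const_mul _).fract measurable_const)
    measurable_const measurable_const

lemma abs_rademacher (i : ℕ) (t : ℝ) : |rademacher i t| = 1 := by
  unfold rademacher; split_ifs <;> norm_num

lemma memLp_sum_rademacher_smul {E : Type*} [NormedAddCommGroup E] [NormedSpace ℝ E]
    (μ : Measure ℝ) [IsFiniteMeasure μ] (p : ℝ≥0∞) (n : ℕ) (w : ℕ → E) :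
    MemLp (fun t => ∑ k ∈ range n, rademacher k t • w k) p μ := by
  refine MemLp.of_bound ?_ (∑ k ∈ range n, ‖w k‖) (ae_of_all _ fun t => ?_)
  · exact (Finset.stronglyMeasurable_fun_sum _ fun k _ =>
      (measurable_rademacher k).stronglyMeasurable.smul_const (w k)).aestronglyMeasurable
  · refine (norm_sum_le _ _).trans_eq (sum_congr rfl fun k _ => ?_)
    rw [norm_smul, Real.norm_eq_abs, abs_rademacher, one_mul]

lemma rpow_sum_rpow_le {ι : Type*} (s : Finset ι) {f : ι → ℝ} (hf : ∀ i, 0 ≤ f i) {p q : ℝ}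
    (hp : 0 < p) (hpq : p ≤ q) :
    (∑ i ∈ s, f i ^ q) ^ (1 / q) ≤ (∑ i ∈ s, f i ^ p) ^ (1 / p) := by
  classical
  have hq : 0 < q := hp.trans_le hpq
  induction s using Finset.induction_on with
  | empty => simp [zero_rpow, hp.ne', hq.ne']
  | insert a s ha ih =>
    have hsum_nonneg (r : ℝ) : 0 ≤ ∑ i ∈ s, f i ^ r := sum_nonneg fun i _ => rpow_nonneg (hf i) r
    have hsum (r : ℝ) (hr : 0 < r) : ∑ i ∈ s, f i ^ r = ((∑ i ∈ s, f i ^ r) ^ (1 / r)) ^ r := by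
      rw [one_div, rpow_inv_rpow (hsum_nonneg r) hr.ne']
    rw [sum_insert ha, sum_insert ha, hsum q hq, hsum p hp]
    calc (f a ^ q + ((∑ i ∈ s, f i ^ q) ^ (1 / q)) ^ q) ^ (1 / q)
        ≤ (f a ^ p + ((∑ i ∈ s, f i ^ q) ^ (1 / q)) ^ p) ^ (1 / p) :=
          rpow_add_rpow_le (hf a) (rpow_nonneg (hsum_nonneg q) _) hp hpq
      _ ≤ (f a ^ p + ((∑ i ∈ s, f i ^ p) ^ (1 / p)) ^ p) ^ (1 / p) := by
          have := hf a
          have := rpow_nonneg (hsum_nonneg q) (1 / q)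
          gcongr

lemma abs_inner_le_Lp_mul_L2 {ι : Type*} (s : Finset ι) (a b : ι → ℝ)
    {p p' : ℝ} (hpp' : p'.HolderConjugate p) (hp : 2 ≤ p) :
    |∑ i ∈ s, a i * b i| ≤
      (∑ i ∈ s, |a i| ^ p') ^ (1 / p') * (∑ i ∈ s, b i ^ 2) ^ ((1 : ℝ) / 2) :=
  calc |∑ i ∈ s, a i * b i| ≤ ∑ i ∈ s, |a i| * |b i| :=
        (abs_sum_le_sum_abs _ _).trans_eq (sum_congr rfl fun i _ => abs_mul _ _)
    _ ≤ (∑ i ∈ s, |a i| ^ p') ^ (1 / p') * (∑ i ∈ s, |b i| ^ p) ^ (1 / p) := by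
        simpa only [abs_abs] using inner_le_Lp_mul_Lq s (|a ·|) (|b ·|) hpp'
    _ ≤ (∑ i ∈ s, |a i| ^ p') ^ (1 / p') * (∑ i ∈ s, |b i| ^ (2 : ℝ)) ^ ((1 : ℝ) / 2) := by
        gcongr
        exact rpow_sum_rpow_le s (fun i => abs_nonneg _) two_pos hp
    _ = (∑ i ∈ s, |a i| ^ p') ^ (1 / p') * (∑ i ∈ s, b i ^ 2) ^ ((1 : ℝ) / 2) := by
        simp only [rpow_two, sq_abs]

section FiniteNorms

variable {Z : Type*}

lemma lpNormFin_nonneg [NormedAddCommGroup Z] (q : ℝ≥0∞) (m : ℕ) (x : ℕ → Z) :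
    0 ≤ lpNormFin q m x := by
  unfold lpNormFin; split_ifs
  · exact Real.iSup_nonneg fun i => norm_nonneg _
  · positivity

lemma lpNormFin_ofReal [NormedAddCommGroup Z] {r : ℝ} (hr : 0 ≤ r) (m : ℕ) (x : ℕ → Z) :
    lpNormFin (ENNReal.ofReal r) m x = (∑ i ∈ range m, ‖x i‖ ^ r) ^ (1 / r) := by
  simp [lpNormFin, ENNReal.toReal_ofReal hr]

lemma norm_le_lpNormFin_top [NormedAddCommGroup Z] {m i : ℕ} (hi : i < m) (x : ℕ → Z) :
    ‖x i‖ ≤ lpNormFin ∞ m x := by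
  rw [lpNormFin, if_pos rfl]
  exact le_ciSup (f := fun j : Fin m => ‖x j‖) (Set.finite_range _).bddAbove ⟨i, hi⟩

lemma weakNorm_nonneg [NormedAddCommGroup Z] [NormedSpace ℝ Z] (q : ℝ≥0∞) (m : ℕ)
    (x : ℕ → Z) : 0 ≤ weakNorm q m x := by
  unfold weakNorm; split_ifs
  · exact Real.iSup_nonneg fun i => norm_nonneg _
  · exact Real.iSup_nonneg fun ψ => by positivity

lemma weakNorm_ofReal [NormedAddCommGroup Z] [NormedSpace ℝ Z] {r : ℝ} (hr : 0 ≤ r) (m : ℕ)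
    (x : ℕ → Z) :
    weakNorm (ENNReal.ofReal r) m x =
      ⨆ ψ : {ψ : Z →L[ℝ] ℝ // ‖ψ‖ ≤ 1}, (∑ i ∈ range m, |ψ.1 (x i)| ^ r) ^ (1 / r) := by
  simp [weakNorm, ENNReal.toReal_ofReal hr]

lemma conjExp_ofReal_one : conjExp (ENNReal.ofReal 1) = ∞ := by
  simp [conjExp]

lemma conjExp_ofReal {r : ℝ} (hr : 1 < r) :
    conjExp (ENNReal.ofReal r) = ENNReal.ofReal r.conjExponent := by
  have hr0 : 0 < r := one_pos.trans hr
  have hinv : 0 < 1 - r⁻¹ := sub_pos.2 (inv_lt_one_of_one_lt₀ hr)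
  rw [conjExp, ← ENNReal.ofReal_inv_of_pos hr0, ← ENNReal.ofReal_one,
    ← ENNReal.ofReal_sub 1 (inv_nonneg.2 hr0.le), ← ENNReal.ofReal_inv_of_pos hinv,
    Real.conjExponent]
  congr 1
  field_simp

lemma sum_mul_le_lpNormFin_conjExp_mul_lpNormFin {r : ℝ} (hr : 1 ≤ r) (m : ℕ) (a b : ℕ → ℝ) :
    ∑ i ∈ range m, a i * b i ≤
      lpNormFin (conjExp (ENNReal.ofReal r)) m a * lpNormFin (ENNReal.ofReal r) m b := by
  rcases hr.eq_or_lt with rfl | hr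
  · rw [conjExp_ofReal_one, lpNormFin_ofReal zero_le_one]
    simp only [rpow_one, div_one, mul_sum]
    refine sum_le_sum fun i hi => ?_
    calc a i * b i ≤ ‖a i‖ * ‖b i‖ := by rw [← norm_mul]; exact le_norm_self _
      _ ≤ lpNormFin ∞ m a * ‖b i‖ := by
          gcongr; exact norm_le_lpNormFin_top (mem_range.1 hi) a
  · have hconj := (HolderConjugate.conjExponent hr).symm
    rw [conjExp_ofReal hr, lpNormFin_ofReal hconj.nonneg, lpNormFin_ofReal hconj.symm.nonneg]
    simpa only [Real.norm_eq_abs] using inner_le_Lp_mul_Lq (range m) a b hconj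

lemma rpow_sum_abs_apply_le_opNorm_mul_weakNorm [NormedAddCommGroup Z] [NormedSpace ℝ Z]
    {r : ℝ} (hr : 0 < r) (m : ℕ) (x : ℕ → Z) (ψ : Z →L[ℝ] ℝ) :
    (∑ i ∈ range m, |ψ (x i)| ^ r) ^ (1 / r) ≤ ‖ψ‖ * weakNorm (ENNReal.ofReal r) m x := by
  have hball : ∀ χ : Z →L[ℝ] ℝ, ‖χ‖ ≤ 1 →
      (∑ i ∈ range m, |χ (x i)| ^ r) ^ (1 / r) ≤ weakNorm (ENNReal.ofReal r) m x := by
    intro χ hχ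
    rw [weakNorm_ofReal hr.le]
    refine le_ciSup (f := fun χ : {χ : Z →L[ℝ] ℝ // ‖χ‖ ≤ 1} =>
      (∑ i ∈ range m, |χ.1 (x i)| ^ r) ^ (1 / r)) ⟨(∑ i ∈ range m, ‖x i‖ ^ r) ^ (1 / r), ?_⟩
      ⟨χ, hχ⟩
    rintro _ ⟨χ', rfl⟩
    dsimp only
    gcongr with i
    calc |χ'.1 (x i)| ≤ ‖χ'.1‖ * ‖x i‖ := χ'.1.le_opNorm (x i)
      _ ≤ ‖x i‖ := mul_le_of_le_one_left (norm_nonneg _) χ'.2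
  rcases eq_or_ne ψ 0 with rfl | hψ
  · simp [zero_rpow hr.ne', zero_rpow (inv_ne_zero hr.ne')]
  have hψ0 : 0 < ‖ψ‖ := norm_pos_iff.2 hψ
  have hscaled := hball (‖ψ‖⁻¹ • ψ)
    (by rw [norm_smul, norm_inv, norm_norm, inv_mul_cancel₀ hψ0.ne'])
  have hsum : ∑ i ∈ range m, |(‖ψ‖⁻¹ • ψ) (x i)| ^ r =
      (‖ψ‖⁻¹) ^ r * ∑ i ∈ range m, |ψ (x i)| ^ r := by
    rw [mul_sum]
    refine sum_congr rfl fun i _ => ?_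
    rw [smul_apply, smul_eq_mul, abs_mul, abs_inv, abs_norm,
      mul_rpow (by positivity) (abs_nonneg _)]
  rw [hsum, mul_rpow (by positivity) (by positivity), one_div, rpow_rpow_inv (by positivity)
    hr.ne', inv_mul_le_iff₀ hψ0] at hscaled
  rwa [one_div]

lemma sum_abs_apply_rpow_le_weakNorm_mul_norm [NormedAddCommGroup Z] [NormedSpace ℝ Z]
    {r : ℝ} (hr : 0 < r) (m : ℕ) (φ : ℕ → Z →L[ℝ] ℝ) (y : Z) :
    ∑ i ∈ range m, |φ i y| ^ r ≤ (weakNorm (ENNReal.ofReal r) m φ * ‖y‖) ^ r := by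
  have h := rpow_sum_abs_apply_le_opNorm_mul_weakNorm hr m φ
    (NormedSpace.inclusionInDoubleDual ℝ Z y)
  simp only [NormedSpace.dual_def, one_div] at h
  rw [← rpow_inv_le_iff_of_pos (by positivity)
    (mul_nonneg (weakNorm_nonneg _ _ _) (norm_nonneg _)) hr, mul_comm]
  exact h.trans (mul_le_mul_of_nonneg_right (NormedSpace.double_dual_bound ℝ Z y)
    (weakNorm_nonneg _ _ _))

end FiniteNorms

lemma lpNormFin_integral_le_weakNorm_mul {Ω Y : Type*} [MeasurableSpace Ω] {μ : Measure Ω}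
    [NormedAddCommGroup Y] [NormedSpace ℝ Y] {r : ℝ} (hr : 0 < r) {S : Ω → Y}
    (hS : MemLp S (ENNReal.ofReal r) μ) (m : ℕ) (φ : ℕ → Y →L[ℝ] ℝ) :
    lpNormFin (ENNReal.ofReal r) m (fun i => (∫ t, |φ i (S t)| ^ r ∂μ) ^ (1 / r)) ≤
      weakNorm (ENNReal.ofReal r) m φ * (∫ t, ‖S t‖ ^ r ∂μ) ^ (1 / r) := by
  have hr0 : ENNReal.ofReal r ≠ 0 := ENNReal.ofReal_ne_zero_iff.2 hr
  have hint : ∀ i, Integrable (fun t => |φ i (S t)| ^ r) μ := fun i => by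
    simpa [ENNReal.toReal_ofReal hr.le] using
      (hS.continuousLinearMap_comp (φ i)).integrable_norm_rpow hr0 ENNReal.ofReal_ne_top
  have hSint : Integrable (fun t => ‖S t‖ ^ r) μ := by
    simpa [ENNReal.toReal_ofReal hr.le] using hS.integrable_norm_rpow hr0 ENNReal.ofReal_ne_top
  set W := weakNorm (ENNReal.ofReal r) m φ
  have hW : 0 ≤ W := weakNorm_nonneg _ _ _
  rw [lpNormFin_ofReal hr.le]
  calc (∑ i ∈ range m, ‖(∫ t, |φ i (S t)| ^ r ∂μ) ^ (1 / r)‖ ^ r) ^ (1 / r)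
      = (∫ t, ∑ i ∈ range m, |φ i (S t)| ^ r ∂μ) ^ (1 / r) := by
        rw [integral_finsetSum _ fun i _ => hint i]
        congr 1
        refine sum_congr rfl fun i _ => ?_
        rw [Real.norm_of_nonneg (by positivity), one_div,
          rpow_inv_rpow (integral_nonneg fun t => by positivity) hr.ne']
    _ ≤ (∫ t, W ^ r * ‖S t‖ ^ r ∂μ) ^ (1 / r) := by
        refine rpow_le_rpow (integral_nonneg fun t => by positivity) (integral_mono_of_nonneg
          (ae_of_all _ fun t => by positivity) (hSint.const_mul _) (ae_of_all _ fun t => ?_))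
          (by positivity)
        dsimp only
        rw [← mul_rpow hW (norm_nonneg _)]
        exact sum_abs_apply_rpow_le_weakNorm_mul_norm hr m φ (S t)
    _ = W * (∫ t, ‖S t‖ ^ r ∂μ) ^ (1 / r) := by
        rw [integral_const_mul, mul_rpow (by positivity) (integral_nonneg fun t => by positivity),
          one_div, rpow_rpow_inv hW hr.ne']

theorem stmt16_general {Y : Type v} [NormedAddCommGroup Y] [NormedSpace ℝ Y]
    (p ps qstar : ℝ) (hp : 2 ≤ p) (hps : 1 / p + 1 / ps = 1)
    (hq1 : 1 ≤ qstar)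
    (A K : ℝ) (hA : 0 < A)
    (hKhinchin : ∀ m (a : ℕ → ℝ),
      A * (∑ i ∈ Finset.range m, (a i) ^ 2) ^ ((1:ℝ)/2) ≤
        (∫ t in (0:ℝ)..1, |∑ i ∈ Finset.range m, rademacher i t * a i| ^ qstar) ^
          (1 / qstar))
    (hKahane : ∀ m (w : ℕ → Y),
      (∫ t in (0:ℝ)..1, ‖∑ i ∈ Finset.range m, rademacher i t • w i‖ ^ qstar) ^
          (1 / qstar) ≤ K * radNorm m w)
    (n m : ℕ)
    (w : ℕ → Y) (ν : ℕ → ℕ → ℝ) (φ : ℕ → (Y →L[ℝ] ℝ)) :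
    ∑ i ∈ Finset.range m, |φ i (∑ k ∈ Finset.range n, ν i k • w k)| ≤
      (1 / A) * K *
        lpNormFin (conjExp (ENNReal.ofReal qstar)) m
          (fun i => (∑ k ∈ Finset.range n, |ν i k| ^ ps) ^ (1 / ps)) *
        weakNorm (ENNReal.ofReal qstar) m φ * radNorm n w := by
  have hpsp : ps.HolderConjugate p :=
    (holderConjugate_iff.2 ⟨by linarith, by simpa only [one_div] using hps⟩).symm
  set S : ℝ → Y := fun t => ∑ k ∈ range n, rademacher k t • w k
  set α : ℕ → ℝ := fun i => (∑ k ∈ range n, |ν i k| ^ ps) ^ (1 / ps)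
  set β : ℕ → ℝ := fun i => (∫ t in (0:ℝ)..1, |φ i (S t)| ^ qstar) ^ (1 / qstar)
  have hrow (i : ℕ) : |φ i (∑ k ∈ range n, ν i k • w k)| ≤ 1 / A * (α i * β i) := by
    have hS (t : ℝ) : ∑ k ∈ range n, rademacher k t * φ i (w k) = φ i (S t) := by
      simp only [S, map_sum, map_smul, smul_eq_mul]
    have hKh : A * (∑ k ∈ range n, φ i (w k) ^ 2) ^ ((1 : ℝ) / 2) ≤ β i := by
      simpa only [hS] using hKhinchin n fun k => φ i (w k)
    calc |φ i (∑ k ∈ range n, ν i k • w k)| = |∑ k ∈ range n, ν i k * φ i (w k)| := by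
          simp only [map_sum, map_smul, smul_eq_mul]
      _ ≤ α i * (∑ k ∈ range n, φ i (w k) ^ 2) ^ ((1 : ℝ) / 2) :=
          abs_inner_le_Lp_mul_L2 _ _ _ hpsp hp
      _ ≤ α i * (β i / A) := by gcongr; exact (le_div_iff₀' hA).2 hKh
      _ = 1 / A * (α i * β i) := by ring
  have hβ : lpNormFin (ENNReal.ofReal qstar) m β ≤
      weakNorm (ENNReal.ofReal qstar) m φ * (K * radNorm n w) := by
    have h := lpNormFin_integral_le_weakNorm_mul (by linarith)
      (memLp_sum_rademacher_smul (volume.restrict (Set.Ioc 0 1)) (ENNReal.ofReal qstar) n w) m φ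
    simp only [← intervalIntegral.integral_of_le zero_le_one] at h
    exact h.trans (mul_le_mul_of_nonneg_left (hKahane n w) (weakNorm_nonneg _ _ _))
  calc ∑ i ∈ range m, |φ i (∑ k ∈ range n, ν i k • w k)|
      ≤ 1 / A * ∑ i ∈ range m, α i * β i := by
        rw [mul_sum]; exact sum_le_sum fun i _ => hrow i
    _ ≤ 1 / A * (lpNormFin (conjExp (ENNReal.ofReal qstar)) m α *
          (weakNorm (ENNReal.ofReal qstar) m φ * (K * radNorm n w))) := by
        gcongr
        exact (sum_mul_le_lpNormFin_conjExp_mul_lpNormFin hq1 m α β).trans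
          (mul_le_mul_of_nonneg_left hβ (lpNormFin_nonneg _ _ _))
    _ = _ := by ring

/-- The key finite-dimensional estimate: for `1 ≤ q* ≤ 2 ≤ p < ∞`,
`∑_i |y_i*(∑_k ν_{i,k} w_k)| ≤ (1/A_{q*}) K_{2,q*}
(∑_i (∑_k |ν_{i,k}|^{p*})^{q/p*})^{1/q} ‖(y_i*)‖_{w,q*} (∫_0^1 ‖∑_k r_k(t)w_k‖²dt)^{1/2}`,
where `A_{q*}` is a lower Khinchin constant and `K_{2,q*}` a Kahane constant. -/
theorem stmt16 {Y : Type v} [NormedAddCommGroup Y] [NormedSpace ℝ Y] [CompleteSpace Y]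
    (p ps qstar : ℝ) (hp : 2 ≤ p) (hps : 1 / p + 1 / ps = 1)
    (hq1 : 1 ≤ qstar) (hq2 : qstar ≤ 2)
    (A K : ℝ) (hA : 0 < A)
    (hKhinchin : ∀ m (a : ℕ → ℝ),
      A * (∑ i ∈ Finset.range m, (a i) ^ 2) ^ ((1:ℝ)/2) ≤
        (∫ t in (0:ℝ)..1, |∑ i ∈ Finset.range m, rademacher i t * a i| ^ qstar) ^
          (1 / qstar))
    (hKahane : ∀ m (w : ℕ → Y),
      (∫ t in (0:ℝ)..1, ‖∑ i ∈ Finset.range m, rademacher i t • w i‖ ^ qstar) ^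
          (1 / qstar) ≤ K * radNorm m w)
    (n m : ℕ) (hn : 0 < n) (hm : 0 < m)
    (w : ℕ → Y) (ν : ℕ → ℕ → ℝ) (φ : ℕ → (Y →L[ℝ] ℝ)) :
    ∑ i ∈ Finset.range m, |φ i (∑ k ∈ Finset.range n, ν i k • w k)| ≤
      (1 / A) * K *
        lpNormFin (conjExp (ENNReal.ofReal qstar)) m
          (fun i => (∑ k ∈ Finset.range n, |ν i k| ^ ps) ^ (1 / ps)) *
        weakNorm (ENNReal.ofReal qstar) m φ * radNorm n w :=
  stmt16_general p ps qstar hp hps hq1 A K hA hKhinchin hKahane n m w ν φ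
end
end
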